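/- arXiv:1306.0870 — 6 statements merged into one kernel-verified Lean document; each statement's English description precedes it below -/
import Mathlib

section
/- Let A ⊆ S be commutative rings with S = A + cS and cS ∩ A = cA for a nonzerodivisor c of S lying in A. If J₁, …, Jₙ are ideals of S each containing c, then (J₁J₂⋯Jₙ) ∩ A = (J₁ ∩ A)(J₂ ∩ A)⋯(Jₙ ∩ A). -/
/-! Since `S = A + cS`, every ideal `J ∋ c` of `S` is extended from `J ∩ A`, so
`J₁⋯Jₙ = PS` for `P = (J₁ ∩ A)⋯(Jₙ ∩ A)`. Iterating the hypotheses gives `S = A + cⁿS`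
and `cⁿS ∩ A = cⁿA`; hence `PS ⊆ P + cⁿS`, and intersecting with `A` gives
`PS ∩ A ⊆ P + cⁿA = P`, because `cⁿ ∈ P`. -/

namespace Subring

variable {S : Type*} [CommRing S] {A : Subring S} {c : S}

theorem exists_add_pow_mul (hcA : c ∈ A) (h1 : ∀ s : S, ∃ a ∈ A, ∃ t : S, s = a + c * t) :
    ∀ (m : ℕ) (s : S), ∃ a ∈ A, ∃ t : S, s = a + c ^ m * t
  | 0, s => ⟨0, A.zero_mem, s, by ring⟩
  | m + 1, s => by
    obtain ⟨a, ha, t, rfl⟩ := h1 s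
    obtain ⟨a', ha', t', rfl⟩ := exists_add_pow_mul hcA h1 m t
    exact ⟨a + c * a', A.add_mem ha (A.mul_mem hcA ha'), t', by ring⟩

theorem exists_eq_pow_mul (hreg : c ∈ nonZeroDivisors S)
    (h2 : ∀ a : S, a ∈ A → (∃ t : S, a = c * t) → ∃ b ∈ A, a = c * b) :
    ∀ (m : ℕ) (a : S), a ∈ A → (∃ t : S, a = c ^ m * t) → ∃ b ∈ A, a = c ^ m * b
  | 0, a, ha, _ => ⟨a, ha, by ring⟩
  | m + 1, a, ha, ⟨t, hat⟩ => by
    obtain ⟨b, hb, rfl⟩ := h2 a ha ⟨c ^ m * t, by rw [hat]; ring⟩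
    have hbt : b = c ^ m * t :=
      (mul_cancel_left_mem_nonZeroDivisors hreg).mp (by rw [hat]; ring)
    obtain ⟨b', hb', rfl⟩ := exists_eq_pow_mul hreg h2 m b hb ⟨t, hbt⟩
    exact ⟨b', hb', by ring⟩

theorem map_comap_subtype_eq (hcA : c ∈ A) (h1 : ∀ s : S, ∃ a ∈ A, ∃ t : S, s = a + c * t)
    {J : Ideal S} (hcJ : c ∈ J) : (J.comap A.subtype).map A.subtype = J := by
  refine le_antisymm Ideal.map_comap_le fun s hs => ?_
  obtain ⟨a, ha, t, rfl⟩ := h1 s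
  have haJ : a ∈ J := by
    simpa using J.sub_mem hs (J.mul_mem_right t hcJ)
  have hmem : ∀ {x : S} (hx : x ∈ A), x ∈ J → x ∈ (J.comap A.subtype).map A.subtype :=
    fun hx hxJ => Ideal.mem_map_of_mem A.subtype (x := ⟨_, hx⟩) hxJ
  exact add_mem (hmem ha haJ) (Ideal.mul_mem_right t _ (hmem hcA hcJ))

theorem exists_add_mul_of_mem_map_subtype {d : S}
    (hd : ∀ s : S, ∃ a ∈ A, ∃ t : S, s = a + d * t) {P : Ideal A} {s : S}
    (hs : s ∈ P.map A.subtype) : ∃ q ∈ P, ∃ t : S, s = q + d * t := by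
  induction hs using Submodule.span_induction with
  | mem _ h =>
    obtain ⟨q, hq, rfl⟩ := h
    exact ⟨q, hq, 0, by simp⟩
  | zero => exact ⟨0, P.zero_mem, 0, by simp⟩
  | add _ _ _ _ hy hz =>
    obtain ⟨q, hq, t, rfl⟩ := hy
    obtain ⟨q', hq', t', rfl⟩ := hz
    exact ⟨q + q', P.add_mem hq hq', t + t', by push_cast; ring⟩
  | smul r _ _ hy =>
    obtain ⟨q, hq, t, rfl⟩ := hy
    obtain ⟨a, ha, u, rfl⟩ := hd r
    exact ⟨⟨a, ha⟩ * q, P.mul_mem_left _ hq, u * q + (a + d * u) * t, by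
      rw [smul_eq_mul]; push_cast; ring⟩

theorem comap_map_subtype_eq {d : S} (hdA : d ∈ A)
    (hd1 : ∀ s : S, ∃ a ∈ A, ∃ t : S, s = a + d * t)
    (hd2 : ∀ a : S, a ∈ A → (∃ t : S, a = d * t) → ∃ b ∈ A, a = d * b)
    {P : Ideal A} (hdP : ⟨d, hdA⟩ ∈ P) : (P.map A.subtype).comap A.subtype = P := by
  refine le_antisymm (fun x hx => ?_) Ideal.le_comap_map
  obtain ⟨q, hq, t, hxq⟩ := exists_add_mul_of_mem_map_subtype hd1 hx
  replace hxq : (x : S) = q + d * t := hxq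
  obtain ⟨b, hb, hb'⟩ := hd2 (x - q : A) (x - q).2 ⟨t, by push_cast; rw [hxq]; ring⟩
  have hx_eq : x = q + ⟨d, hdA⟩ * ⟨b, hb⟩ := by
    ext
    push_cast at hb' ⊢
    linear_combination hb'
  rw [hx_eq]
  exact P.add_mem hq (P.mul_mem_right _ hdP)

end Subring

/-- Let `A ⊆ S` be commutative rings with `S = A + cS` and `cS ∩ A = cA` for a
nonzerodivisor `c` of `S` lying in `A`. If `J₁, …, Jₙ` are ideals of `S` each containing
`c`, then `(J₁⋯Jₙ) ∩ A = (J₁ ∩ A)⋯(Jₙ ∩ A)`. -/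
theorem stmt4 (S : Type*) [CommRing S] (A : Subring S) (c : S)
    (hcA : c ∈ A) (hreg : c ∈ nonZeroDivisors S)
    (h1 : ∀ s : S, ∃ a ∈ A, ∃ t : S, s = a + c * t)
    (h2 : ∀ a : S, a ∈ A → (∃ t : S, a = c * t) → ∃ b ∈ A, a = c * b)
    (n : ℕ) (J : Fin n → Ideal S) (hJ : ∀ i, c ∈ J i) :
    (∏ i, J i).comap A.subtype = ∏ i, (J i).comap A.subtype := by
  have hcP : (⟨c, hcA⟩ : A) ^ n ∈ ∏ i, (J i).comap A.subtype := by
    simpa using Ideal.prod_mem_prod (s := Finset.univ) (I := fun i => (J i).comap A.subtype)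
      (x := fun _ => ⟨c, hcA⟩) fun i _ => hJ i
  have hJ_ext : ∏ i, J i = (∏ i, (J i).comap A.subtype).map A.subtype :=
    calc ∏ i, J i = ∏ i, ((J i).comap A.subtype).map A.subtype :=
          Finset.prod_congr rfl fun i _ => (A.map_comap_subtype_eq hcA h1 (hJ i)).symm
      _ = _ := (map_prod (Ideal.mapHom A.subtype) _ _).symm
  rw [hJ_ext]
  exact A.comap_map_subtype_eq (A.pow_mem hcA n) (A.exists_add_pow_mul hcA h1 n)
    (A.exists_eq_pow_mul hreg h2 n) hcP
end

section
/- Let R ⊆ S be a quadratic extension of commutative rings (meaning st ∈ sR + tR + R for all s, t ∈ S), let A be a subring of R and c ∈ A a nonzerodivisor of S with S = A + cS, and let I be an ideal of R with c ∈ I that is contracted from S (I = IS ∩ R). Then I² = (I ∩ A)·I. -/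
/-!
Write `x, y ∈ I` as `x = a + c s`, `y = b + c t` with `a, b ∈ A`. Since `I` is contracted and
`c ∈ I`, also `a, b ∈ I ∩ A`. Quadraticity gives `s t = s α + t β + r` with `α, β, r ∈ R`, so
`x y = a b + a (y - b) + b (x - a) + c (x - a) α + c (y - b) β + c (c r)`,
and each summand is a product of an element of `I ∩ A` and an element of `I`.
-/

theorem Ideal.mem_of_eq_add_mul_of_comap_map_le {R S : Type*} [CommRing R] [CommRing S]
    (f : R →+* S) {I : Ideal R} (hI : (I.map f).comap f ≤ I) {x a c : R} {s : S}
    (hx : x ∈ I) (hc : c ∈ I) (h : f x = f a + f c * s) : a ∈ I := by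
  refine hI (Ideal.mem_comap.mpr ?_)
  rw [eq_sub_of_add_eq h.symm]
  exact sub_mem (Ideal.mem_map_of_mem f hx) (Ideal.mul_mem_right s _ (Ideal.mem_map_of_mem f hc))

theorem Subring.mul_mem_mul_of_eq_add_mul {S : Type*} [CommRing S] {R : Subring S}
    {I J : Ideal R} (hJI : J ≤ I) {x y a b c α β r : R} {s t : S}
    (hx : x ∈ I) (hy : y ∈ I) (ha : a ∈ J) (hb : b ∈ J) (hc : c ∈ J)
    (hxs : (x : S) = a + c * s) (hyt : (y : S) = b + c * t)
    (hst : s * t = s * α + t * β + r) :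
    x * y ∈ J * I := by
  have key : x * y = a * b + a * (y - b) + b * (x - a) +
      c * ((x - a) * α) + c * ((y - b) * β) + c * (c * r) := by
    apply Subtype.ext
    push_cast
    rw [hxs, hyt]
    linear_combination (c : S) ^ 2 * hst
  have hxa : x - a ∈ I := sub_mem hx (hJI ha)
  have hyb : y - b ∈ I := sub_mem hy (hJI hb)
  rw [key]
  refine add_mem (add_mem (add_mem (add_mem (add_mem ?_ ?_) ?_) ?_) ?_) ?_
  · exact Ideal.mul_mem_mul ha (hJI hb)
  · exact Ideal.mul_mem_mul ha hyb
  · exact Ideal.mul_mem_mul hb hxa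
  · exact Ideal.mul_mem_mul hc (I.mul_mem_right α hxa)
  · exact Ideal.mul_mem_mul hc (I.mul_mem_right β hyb)
  · exact Ideal.mul_mem_mul hc (I.mul_mem_right r (hJI hc))

theorem stmt5_general (S : Type*) [CommRing S] (R A : Subring S) (hAR : A ≤ R)
    (hquad : ∀ s t : S, ∃ a b r : R, s * t = s * (a : S) + t * (b : S) + (r : S))
    (c : R) (hcA : (c : S) ∈ A)
    (h1 : ∀ s : S, ∃ a ∈ A, ∃ t : S, s = a + (c : S) * t)
    (I : Ideal R) (hcI : c ∈ I)
    (hcontr : I = (I.map R.subtype).comap R.subtype) :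
    I ^ 2 = Ideal.span {x : R | x ∈ I ∧ (x : S) ∈ A} * I := by
  set J := Ideal.span {x : R | x ∈ I ∧ (x : S) ∈ A}
  have hJI : J ≤ I := Ideal.span_le.mpr fun x hx => hx.1
  have hdecomp : ∀ x ∈ I, ∃ a ∈ J, ∃ s : S, (x : S) = (a : S) + c * s := by
    intro x hx
    obtain ⟨a, haA, s, hxs⟩ := h1 x
    have haI : (⟨a, hAR haA⟩ : R) ∈ I :=
      Ideal.mem_of_eq_add_mul_of_comap_map_le R.subtype hcontr.ge hx hcI hxs
    exact ⟨⟨a, hAR haA⟩, Ideal.subset_span ⟨haI, haA⟩, s, hxs⟩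
  refine le_antisymm ?_ (sq I ▸ Ideal.mul_mono_left hJI)
  rw [sq, Ideal.mul_le]
  intro x hx y hy
  obtain ⟨a, haJ, s, hxs⟩ := hdecomp x hx
  obtain ⟨b, hbJ, t, hyt⟩ := hdecomp y hy
  obtain ⟨α, β, r, hst⟩ := hquad s t
  exact Subring.mul_mem_mul_of_eq_add_mul hJI hx hy haJ hbJ
    (Ideal.subset_span ⟨hcI, hcA⟩) hxs hyt hst

/-- Let `R ⊆ S` be a quadratic extension (`st ∈ sR + tR + R` for all `s,t ∈ S`), let `A` be
a subring of `R` and `c ∈ A` a nonzerodivisor of `S` with `S = A + cS`, and let `I` be an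
ideal of `R` with `c ∈ I` that is contracted from `S`. Then `I² = (I ∩ A)·I`. -/
theorem stmt5 (S : Type*) [CommRing S] (R A : Subring S) (hAR : A ≤ R)
    (hquad : ∀ s t : S, ∃ a b r : R, s * t = s * (a : S) + t * (b : S) + (r : S))
    (c : R) (hcA : (c : S) ∈ A) (hreg : (c : S) ∈ nonZeroDivisors S)
    (h1 : ∀ s : S, ∃ a ∈ A, ∃ t : S, s = a + (c : S) * t)
    (I : Ideal R) (hcI : c ∈ I)
    (hcontr : I = (I.map R.subtype).comap R.subtype) :
    I ^ 2 = Ideal.span {x : R | x ∈ I ∧ (x : S) ∈ A} * I :=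
  stmt5_general S R A hAR hquad c hcA h1 I hcI hcontr
end

section
/- Let A be a commutative ring, I an ideal of A, c ∈ I a nonzerodivisor, and C = {cᵏ : k > 0}. If K is an A-module that is C-divisible (cK = K) and C-torsion-free (c is a nonzerodivisor on K), then Extᴬⁱ(A/Iᵏ, K) = 0 for all i ≥ 0 and k ≥ 1. -/
/-!
Multiplication by `r = cᵏ` on `Extⁱ(X, Y)` can be computed from either argument. Through `X = A/Iᵏ`
it is zero, since `cᵏ ∈ Iᵏ` kills `X`; through `Y = K` it is an isomorphism, since `c` acts
bijectively on `K`. A zero map that is an isomorphism has zero source.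
-/

open CategoryTheory Limits

universe u

section LeftDerived

variable {R : Type*} [Ring R] {C : Type*} [Category* C] [Abelian C] [Linear R C]
  [HasProjectiveResolutions C] {D : Type*} [Category* D] [Abelian D]

/-- On a projective resolution both sides are induced by the chain map `r • 𝟙`. -/
lemma NatTrans.leftDerived_app_eq_map_smul_id {F : C ⥤ D} [F.Additive] (r : R) (α : F ⟶ F)
    (hα : ∀ Z, α.app Z = F.map (r • 𝟙 Z)) (n : ℕ) (X : C) :
    (NatTrans.leftDerived α n).app X = (F.leftDerived n).map (r • 𝟙 X) := by
  let P := projectiveResolution X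
  rw [P.leftDerived_app_eq α n, F.leftDerived_map_eq n (r • 𝟙 X) (r • 𝟙 P.complex)]
  · congr 3
    ext m
    exact hα _
  · ext
    simp only [HomologicalComplex.comp_f, ChainComplex.single₀_map_f_zero, Linear.smul_comp,
      Category.id_comp]
    erw [HomologicalComplex.smul_f_apply, Linear.comp_smul, Category.comp_id]

lemma Functor.leftDerived_map_zero (F : C ⥤ D) [F.Additive] (n : ℕ) (X Y : C) :
    (F.leftDerived n).map (0 : X ⟶ Y) = 0 := by
  rw [F.leftDerived_map_eq n 0
    (0 : (projectiveResolution X).complex ⟶ (projectiveResolution Y).complex) (by simp)]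
  simp only [Functor.map_zero, zero_comp, comp_zero]

end LeftDerived

theorem isZero_Ext_of_smul_id {R : Type*} [Ring R] {C : Type*} [Category* C] [Abelian C]
    [Linear R C] [EnoughProjectives C] (r : R) {X Y : C} (hX : r • 𝟙 X = 0)
    [IsIso (r • 𝟙 Y)] (n : ℕ) : IsZero (((Ext R C n).obj (Opposite.op X)).obj Y) := by
  have hzero : ((Ext R C n).obj (Opposite.op X)).map (r • 𝟙 Y) = 0 := by
    change ((NatTrans.leftDerived ((linearYoneda R C).map (r • 𝟙 Y)).rightOp n).app X).unop = 0
    rw [NatTrans.leftDerived_app_eq_map_smul_id r, hX, Functor.leftDerived_map_zero]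
    · rfl
    · intro Z
      apply Quiver.Hom.unop_inj
      ext (φ : Z ⟶ Y)
      change φ ≫ (r • 𝟙 Y) = (r • 𝟙 Z) ≫ φ
      simp
  let E := ((Ext R C n).obj (Opposite.op X)).obj Y
  have : IsIso (0 : E ⟶ E) := hzero ▸ inferInstance
  exact ((isIsoZero_iff_source_target_isZero E E).mp this).1

section ModuleCat

variable {R : Type*} [CommRing R]

lemma ModuleCat.smul_id_eq_zero {M : ModuleCat R} {r : R} (hr : r ∈ Module.annihilator R M) :
    r • 𝟙 M = 0 := by
  ext x
  simpa using Module.mem_annihilator.mp hr x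

lemma ModuleCat.isIso_smul_id {M : ModuleCat R} {r : R}
    (hr : Function.Bijective (r • · : M → M)) : IsIso (r • 𝟙 M) :=
  (ConcreteCategory.isIso_iff_bijective _).mpr hr

end ModuleCat

theorem stmt8_general {A : Type u} [CommRing A] (I : Ideal A) (c : A) (hcI : c ∈ I)
    (K : Type u) [AddCommGroup K] [Module A K]
    (hdiv : ∀ y : K, ∃ z : K, y = c • z)
    (htf : ∀ y : K, c • y = 0 → y = 0)
    (i k : ℕ) :
    Subsingleton (((Ext A (ModuleCat.{u} A) i).obj
        (Opposite.op (ModuleCat.of A (A ⧸ I ^ k)))).obj (ModuleCat.of A K)) := by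
  have hX : c ^ k • 𝟙 (ModuleCat.of A (A ⧸ I ^ k)) = 0 := by
    apply ModuleCat.smul_id_eq_zero
    rw [Ideal.annihilator_quotient]
    exact Ideal.pow_mem_pow hcI k
  have hc : Function.Bijective (c • · : K → K) :=
    ⟨IsSMulRegular.of_right_eq_zero_of_smul htf, fun y => (hdiv y).imp fun _ h => h.symm⟩
  have : IsIso (c ^ k • 𝟙 (ModuleCat.of A K)) :=
    ModuleCat.isIso_smul_id (smul_iterate (α := K) c k ▸ hc.iterate k)
  exact ModuleCat.subsingleton_of_isZero (isZero_Ext_of_smul_id (c ^ k) hX i)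

/-- Let `A` be a commutative ring, `I` an ideal, `c ∈ I` a nonzerodivisor. If `K` is an
`A`-module that is divisible by `c` (`cK = K`) and `c`-torsion-free (`c` is a
nonzerodivisor on `K`), then `Extᴬⁱ(A/Iᵏ, K) = 0` for all `i ≥ 0` and `k ≥ 1`. -/
theorem stmt8 {A : Type u} [CommRing A] (I : Ideal A) (c : A) (hcI : c ∈ I)
    (hreg : c ∈ nonZeroDivisors A)
    (K : Type u) [AddCommGroup K] [Module A K]
    (hdiv : ∀ y : K, ∃ z : K, y = c • z)
    (htf : ∀ y : K, c • y = 0 → y = 0)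
    (i k : ℕ) (hk : 1 ≤ k) :
    Subsingleton (((Ext A (ModuleCat.{u} A) i).obj
        (Opposite.op (ModuleCat.of A (A ⧸ I ^ k)))).obj (ModuleCat.of A K)) :=
  stmt8_general I c hcI K hdiv htf i k
end

section
/- Let A ⊆ S be an extension of commutative rings and C a multiplicatively closed set of nonzerodivisors of S contained in A such that for each c ∈ C the map A/cA → S/cS is an isomorphism. Then for ideals: the maps I ↦ IS and J ↦ J ∩ A give a one-to-one correspondence between ideals of A meeting C and ideals of S meeting C, i.e., for any ideal I of A with I ∩ C ≠ ∅ one has IS ∩ A = I, and for any ideal J of S with J ∩ C ≠ ∅ one has (J ∩ A)S = J. -/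
/-!
Pick `c ∈ C` in the ideal, so that `S = A + cS`. Then `IS ⊆ I + cS`, hence
`IS ∩ A ⊆ I + (cS ∩ A) = I + cA = I`; and `J = (J ∩ A) + cS ⊆ (J ∩ A)S`.
-/

namespace Ideal

variable {S : Type*} [CommRing S] {A : Subring S}

theorem exists_add_mul_of_mem_map_subtype {I : Ideal A} {x : A}
    (hsum : ∀ s : S, ∃ a ∈ A, ∃ t : S, s = a + x * t) {s : S} (hs : s ∈ I.map A.subtype) :
    ∃ i ∈ I, ∃ t : S, s = i + x * t := by
  refine Submodule.span_induction ?_ ?_ ?_ ?_ hs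
  · rintro _ ⟨i, hi, rfl⟩
    exact ⟨i, hi, 0, by simp⟩
  · exact ⟨0, I.zero_mem, 0, by simp⟩
  · rintro _ _ _ _ ⟨i, hi, u, rfl⟩ ⟨j, hj, v, rfl⟩
    exact ⟨i + j, I.add_mem hi hj, u + v, by push_cast; ring⟩
  · rintro r _ _ ⟨i, hi, u, rfl⟩
    obtain ⟨a, haA, t, rfl⟩ := hsum r
    refine ⟨⟨a, haA⟩ * i, I.mul_mem_left _ hi, a * u + t * i + x * (t * u), ?_⟩
    simp only [smul_eq_mul, Subring.coe_mul]
    ring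

theorem comap_map_subtype_eq {I : Ideal A} {x : A} (hxI : x ∈ I)
    (hsum : ∀ s : S, ∃ a ∈ A, ∃ t : S, s = a + x * t)
    (hdvd : ∀ a ∈ A, (∃ t : S, a = x * t) → ∃ b ∈ A, a = x * b) :
    (I.map A.subtype).comap A.subtype = I := by
  refine le_antisymm (fun a ha => ?_) le_comap_map
  obtain ⟨i, hi, t, hait⟩ := exists_add_mul_of_mem_map_subtype hsum ha
  have hdiff : ((a - i : A) : S) = x * t := by
    simp only [Subring.coe_subtype] at hait
    push_cast
    linear_combination hait
  obtain ⟨b, hbA, hb⟩ := hdvd _ (a - i).2 ⟨t, hdiff⟩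
  have ha_eq : a = i + x * ⟨b, hbA⟩ := by
    apply Subtype.ext
    push_cast at hb ⊢
    linear_combination hb
  rw [ha_eq]
  exact I.add_mem hi (I.mul_mem_right _ hxI)

theorem map_comap_subtype_eq {J : Ideal S} {x : S} (hxA : x ∈ A) (hxJ : x ∈ J)
    (hsum : ∀ s : S, ∃ a ∈ A, ∃ t : S, s = a + x * t) :
    (J.comap A.subtype).map A.subtype = J := by
  refine le_antisymm map_comap_le fun s hs => ?_
  obtain ⟨a, haA, t, rfl⟩ := hsum s
  have haJ : a ∈ J := by
    simpa using J.sub_mem hs (J.mul_mem_right t hxJ)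
  have hmem : ∀ y (hy : y ∈ A), y ∈ J → y ∈ (J.comap A.subtype).map A.subtype :=
    fun y hy hyJ => mem_map_of_mem A.subtype (x := ⟨y, hy⟩) hyJ
  exact add_mem (hmem a haA haJ) (mul_mem_right t _ (hmem x hxA hxJ))

end Ideal

theorem stmt13_general (S : Type*) [CommRing S] (A : Subring S) (C : Submonoid S)
    (hCA : (C : Set S) ⊆ A)
    (h1 : ∀ c ∈ C, ∀ s : S, ∃ a ∈ A, ∃ t : S, s = a + c * t)
    (h2 : ∀ c ∈ C, ∀ a : S, a ∈ A → (∃ t : S, a = c * t) → ∃ b ∈ A, a = c * b) :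
    (∀ I : Ideal A, (∃ x : A, x ∈ I ∧ (x : S) ∈ C) →
        (I.map A.subtype).comap A.subtype = I) ∧
      (∀ J : Ideal S, (∃ x : S, x ∈ J ∧ x ∈ C) →
        (J.comap A.subtype).map A.subtype = J) :=
  ⟨fun _ ⟨_, hxI, hxC⟩ => Ideal.comap_map_subtype_eq hxI (h1 _ hxC) (h2 _ hxC),
    fun _ ⟨_, hxJ, hxC⟩ => Ideal.map_comap_subtype_eq (hCA hxC) hxJ (h1 _ hxC)⟩

/-- Let `A ⊆ S` be a `C`-analytic extension: `C` is a multiplicatively closed set of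
nonzerodivisors of `S` contained in `A` such that for each `c ∈ C` the map `A/cA → S/cS`
is an isomorphism (equivalently `S = A + cS` and `cS ∩ A = cA`).  Then `I ↦ IS` and
`J ↦ J ∩ A` give a one-to-one correspondence between ideals of `A` meeting `C` and ideals
of `S` meeting `C`: for an ideal `I` of `A` meeting `C` one has `IS ∩ A = I`, and for an
ideal `J` of `S` meeting `C` one has `(J ∩ A)S = J`. -/
theorem stmt13 (S : Type*) [CommRing S] (A : Subring S) (C : Submonoid S)
    (hCA : (C : Set S) ⊆ A) (hreg : (C : Set S) ⊆ nonZeroDivisors S)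
    (h1 : ∀ c ∈ C, ∀ s : S, ∃ a ∈ A, ∃ t : S, s = a + c * t)
    (h2 : ∀ c ∈ C, ∀ a : S, a ∈ A → (∃ t : S, a = c * t) → ∃ b ∈ A, a = c * b) :
    (∀ I : Ideal A, (∃ x : A, x ∈ I ∧ (x : S) ∈ C) →
        (I.map A.subtype).comap A.subtype = I) ∧
      (∀ J : Ideal S, (∃ x : S, x ∈ J ∧ x ∈ C) →
        (J.comap A.subtype).map A.subtype = J) :=
  stmt13_general S A C hCA h1 h2
end

section
/- Let A ⊆ S be a C-analytic extension with A quasilocal, and let J be a finitely generated ideal of S meeting C that can be generated by n elements. Then J ∩ A can be generated by n elements, and moreover μ_A(J ∩ A) = μ_S(J). -/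
/-!
Write `d = c²`. Decomposing each generator `xᵢ = aᵢ + d sᵢ` with `aᵢ ∈ A` gives
`J = (a₁, …, aₙ, d) S`, and since `dS ∩ A = dA` every element of `A` lying in `I S`, for an ideal
`I ∋ d` of `A`, already lies in `I`; hence `J ∩ A = (a₁, …, aₙ, d) A`. When `c` is a nonunit,
`d = c · c ∈ 𝔪 (J ∩ A)`, so Nakayama's lemma removes `d` from this generating set. Conversely
`(J ∩ A) S = J`, so generators of `J ∩ A` generate `J`.
-/

open IsLocalRing

noncomputable def minGens {A : Type*} [CommRing A] (I : Ideal A) : ℕ :=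
  sInf {n : ℕ | ∃ s : Finset A, s.card = n ∧ Ideal.span (s : Set A) = I}

lemma minGens_le_card {R : Type*} [CommRing R] {I : Ideal R} {s : Finset R}
    (hs : Ideal.span (s : Set R) = I) : minGens I ≤ s.card :=
  Nat.sInf_le ⟨s, rfl, hs⟩

lemma exists_card_eq_minGens {R : Type*} [CommRing R] {I : Ideal R}
    (hI : ∃ s : Finset R, Ideal.span (s : Set R) = I) :
    ∃ s : Finset R, s.card = minGens I ∧ Ideal.span (s : Set R) = I := by
  obtain ⟨s, hs⟩ := hI
  exact Nat.sInf_mem (s := {n | ∃ s : Finset R, s.card = n ∧ Ideal.span (s : Set R) = I})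
    ⟨s.card, s, rfl, hs⟩

lemma minGens_map_le {R T : Type*} [CommRing R] [CommRing T] (f : R →+* T) {I : Ideal R}
    (hI : ∃ s : Finset R, Ideal.span (s : Set R) = I) : minGens (I.map f) ≤ minGens I := by
  classical
  obtain ⟨s, hcard, rfl⟩ := exists_card_eq_minGens hI
  calc minGens ((Ideal.span (s : Set R)).map f) ≤ (s.image f).card :=
        minGens_le_card (by rw [Finset.coe_image, Ideal.map_span])
    _ ≤ s.card := Finset.card_image_le
    _ = minGens (Ideal.span (s : Set R)) := hcard

lemma Ideal.span_eq_of_span_insert_eq {R : Type*} [CommRing R] [IsLocalRing R] {N : Ideal R}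
    {T : Finset R} {d : R} (hspan : Ideal.span (insert d (T : Set R)) = N)
    (hd : d ∈ maximalIdeal R • N) : Ideal.span (T : Set R) = N := by
  classical
  refine le_antisymm (hspan ▸ Ideal.span_mono (Set.subset_insert _ _)) ?_
  refine Submodule.le_of_le_smul_of_le_jacobson_bot ⟨insert d T, by simpa using hspan⟩
    (maximalIdeal_le_jacobson ⊥) ?_
  calc N = Ideal.span (insert d (T : Set R)) := hspan.symm
    _ ≤ Ideal.span (T : Set R) ⊔ maximalIdeal R • N :=
      Ideal.span_le.mpr (Set.insert_subset (Ideal.mem_sup_right hd)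
        (Ideal.subset_span.trans (le_sup_left : _ ≤ Ideal.span (T : Set R) ⊔ _)))

/-- The one-element form of `C`-analyticity: `S = A + dS` and `dS ∩ A = dA`. -/
structure Subring.IsAnalyticFor {S : Type*} [CommRing S] (A : Subring S) (d : A) : Prop where
  exists_dvd_sub : ∀ s : S, ∃ a : A, (d : S) ∣ s - a
  dvd_of_dvd_coe : ∀ a : A, (d : S) ∣ a → d ∣ a

namespace Subring.IsAnalyticFor

variable {S : Type*} [CommRing S] {A : Subring S} {d : A}

lemma exists_mem_dvd_sub_of_mem_map (hA : A.IsAnalyticFor d) {I : Ideal A} {y : S}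
    (hy : y ∈ I.map A.subtype) : ∃ i ∈ I, (d : S) ∣ y - i := by
  induction hy using Submodule.span_induction with
  | mem x hx =>
    obtain ⟨i, hi, rfl⟩ := hx
    exact ⟨i, hi, by simp⟩
  | zero => exact ⟨0, I.zero_mem, by simp⟩
  | add x y _ _ hx hy =>
    obtain ⟨i, hi, hxi⟩ := hx
    obtain ⟨j, hj, hyj⟩ := hy
    exact ⟨i + j, I.add_mem hi hj, by simpa [add_sub_add_comm] using dvd_add hxi hyj⟩
  | smul r x _ hx =>
    obtain ⟨i, hi, hxi⟩ := hx
    obtain ⟨a, har⟩ := hA.exists_dvd_sub r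
    refine ⟨a * i, I.mul_mem_left a hi, ?_⟩
    have hsplit : r • x - ((a * i : A) : S) = r * (x - i) + (r - a) * i := by
      simp only [smul_eq_mul, MulMemClass.coe_mul]
      ring
    rw [hsplit]
    exact dvd_add (dvd_mul_of_dvd_right hxi r) (dvd_mul_of_dvd_left har i)

lemma comap_map_subtype_eq (hA : A.IsAnalyticFor d) {I : Ideal A} (hdI : d ∈ I) :
    (I.map A.subtype).comap A.subtype = I := by
  refine le_antisymm (fun y hy => ?_) Ideal.le_comap_map
  obtain ⟨i, hiI, hdvd⟩ := hA.exists_mem_dvd_sub_of_mem_map hy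
  obtain ⟨b, hb⟩ := hA.dvd_of_dvd_coe (y - i) hdvd
  simpa [sub_eq_iff_eq_add.mp hb] using I.add_mem (I.mul_mem_right b hdI) hiI

lemma map_comap_subtype_eq (hA : A.IsAnalyticFor d) {J : Ideal S} (hdJ : (d : S) ∈ J) :
    (J.comap A.subtype).map A.subtype = J := by
  refine le_antisymm Ideal.map_comap_le fun x hx => ?_
  obtain ⟨a, t, ht⟩ := hA.exists_dvd_sub x
  have haJ : a ∈ J.comap A.subtype := by
    simpa [sub_eq_iff_eq_add.mp ht] using J.sub_mem hx (J.mul_mem_right t hdJ)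
  rw [eq_add_of_sub_eq ht]
  exact add_mem (Ideal.mul_mem_right _ _
    (Ideal.mem_map_of_mem A.subtype (show d ∈ J.comap A.subtype from hdJ)))
    (Ideal.mem_map_of_mem _ haJ)

lemma exists_finset_card_le_span_insert_eq_comap (hA : A.IsAnalyticFor d)
    {J : Ideal S} (hdJ : (d : S) ∈ J) {s : Finset S} (hs : Ideal.span (s : Set S) = J) :
    ∃ T : Finset A, T.card ≤ s.card ∧
      Ideal.span (insert d (T : Set A)) = J.comap A.subtype := by
  classical
  choose f hf using hA.exists_dvd_sub
  set I := Ideal.span (insert d ((s.image f : Finset A) : Set A))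
  have hdI : d ∈ I := Ideal.subset_span (Set.mem_insert _ _)
  have hIJ : I ≤ J.comap A.subtype := by
    refine Ideal.span_le.mpr (Set.insert_subset hdJ ?_)
    intro a ha
    obtain ⟨x, hx, rfl⟩ := Finset.mem_image.mp ha
    obtain ⟨t, ht⟩ := hf x
    have hxJ : x ∈ J := hs ▸ Ideal.subset_span hx
    show (f x : S) ∈ J
    rw [show (f x : S) = x - d * t by rw [← ht]; ring]
    exact J.sub_mem hxJ (J.mul_mem_right t hdJ)
  have hJI : J ≤ I.map A.subtype := by
    rw [← hs, Ideal.span_le]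
    intro x hx
    obtain ⟨t, ht⟩ := hf x
    rw [SetLike.mem_coe, eq_add_of_sub_eq ht]
    refine add_mem (Ideal.mul_mem_right _ _ (Ideal.mem_map_of_mem A.subtype hdI))
      (Ideal.mem_map_of_mem A.subtype (Ideal.subset_span (Set.mem_insert_of_mem _ ?_)))
    simpa using ⟨x, hx, rfl⟩
  refine ⟨s.image f, Finset.card_image_le, le_antisymm hIJ ?_⟩
  calc J.comap A.subtype ≤ (I.map A.subtype).comap A.subtype := Ideal.comap_mono hJI
    _ = I := hA.comap_map_subtype_eq hdI

lemma exists_finset_card_le_span_eq_comap [IsLocalRing A] {c : A}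
    (hA : A.IsAnalyticFor (c * c)) {J : Ideal S} (hcJ : (c : S) ∈ J) {s : Finset S}
    (hs : Ideal.span (s : Set S) = J) :
    ∃ T : Finset A, T.card ≤ s.card ∧ Ideal.span (T : Set A) = J.comap A.subtype := by
  classical
  have hcN : c ∈ J.comap A.subtype := hcJ
  by_cases hc : IsUnit c
  · have hs_ne : s.Nonempty := by
      rw [Finset.nonempty_iff_ne_empty]
      rintro rfl
      exact hc.ne_zero (Subtype.ext (by simpa [← hs] using hcJ))
    refine ⟨{1}, hs_ne.card_pos, ?_⟩
    rw [Ideal.eq_top_of_isUnit_mem _ hcN hc]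
    simp
  · obtain ⟨T, hcard, hT⟩ :=
      hA.exists_finset_card_le_span_insert_eq_comap (J.mul_mem_left _ hcJ) hs
    exact ⟨T, hcard, Ideal.span_eq_of_span_insert_eq hT (Submodule.smul_mem_smul hc hcN)⟩

end Subring.IsAnalyticFor

theorem stmt14_general (S : Type*) [CommRing S] (A : Subring S) [IsLocalRing A]
    (C : Submonoid S)
    (hCA : (C : Set S) ⊆ A)
    (h1 : ∀ c ∈ C, ∀ s : S, ∃ a ∈ A, ∃ t : S, s = a + c * t)
    (h2 : ∀ c ∈ C, ∀ a : S, a ∈ A → (∃ t : S, a = c * t) → ∃ b ∈ A, a = c * b)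
    (J : Ideal S) (hJC : ∃ x : S, x ∈ J ∧ x ∈ C)
    (n : ℕ) (hJn : ∃ s : Finset S, s.card ≤ n ∧ Ideal.span (s : Set S) = J) :
    (∃ t : Finset A, t.card ≤ n ∧ Ideal.span (t : Set A) = J.comap A.subtype) ∧
      minGens (J.comap A.subtype) = minGens J := by
  obtain ⟨c, hcJ, hcC⟩ := hJC
  obtain ⟨s, hsn, hs⟩ := hJn
  let c' : A := ⟨c, hCA hcC⟩
  have hccC : c * c ∈ C := mul_mem hcC hcC
  have hA : A.IsAnalyticFor (c' * c') := by
    refine ⟨fun x => ?_, fun a ⟨t, ht⟩ => ?_⟩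
    · obtain ⟨a, ha, t, ht⟩ := h1 _ hccC x
      exact ⟨⟨a, ha⟩, t, by simp [ht, c']⟩
    · obtain ⟨b, hb, hab⟩ := h2 _ hccC a a.2 ⟨t, ht⟩
      exact ⟨⟨b, hb⟩, Subtype.ext hab⟩
  obtain ⟨T, hTcard, hT⟩ := hA.exists_finset_card_le_span_eq_comap hcJ hs
  refine ⟨⟨T, hTcard.trans hsn, hT⟩, le_antisymm ?_ ?_⟩
  · obtain ⟨s₀, hs₀card, hs₀⟩ := exists_card_eq_minGens ⟨s, hs⟩
    obtain ⟨T₀, hT₀card, hT₀⟩ := hA.exists_finset_card_le_span_eq_comap hcJ hs₀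
    exact (minGens_le_card hT₀).trans (hs₀card ▸ hT₀card)
  · calc minGens J = minGens ((J.comap A.subtype).map A.subtype) := by
          rw [hA.map_comap_subtype_eq (J.mul_mem_left c hcJ)]
      _ ≤ minGens (J.comap A.subtype) := minGens_map_le _ ⟨T, hT⟩

/-- Let `A ⊆ S` be a `C`-analytic extension with `A` quasilocal, and let `J` be a finitely
generated ideal of `S` meeting `C` that can be generated by `n` elements.  Then `J ∩ A`
can be generated by `n` elements, and moreover `μ_A(J ∩ A) = μ_S(J)`. -/
theorem stmt14 (S : Type*) [CommRing S] (A : Subring S) [IsLocalRing A]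
    (C : Submonoid S)
    (hCA : (C : Set S) ⊆ A) (hreg : (C : Set S) ⊆ nonZeroDivisors S)
    (h1 : ∀ c ∈ C, ∀ s : S, ∃ a ∈ A, ∃ t : S, s = a + c * t)
    (h2 : ∀ c ∈ C, ∀ a : S, a ∈ A → (∃ t : S, a = c * t) → ∃ b ∈ A, a = c * b)
    (J : Ideal S) (hJC : ∃ x : S, x ∈ J ∧ x ∈ C)
    (n : ℕ) (hJn : ∃ s : Finset S, s.card ≤ n ∧ Ideal.span (s : Set S) = J) :
    (∃ t : Finset A, t.card ≤ n ∧ Ideal.span (t : Set A) = J.comap A.subtype) ∧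
      minGens (J.comap A.subtype) = minGens J :=
  stmt14_general S A C hCA h1 h2 J hJC n hJn
end

section
/- Let R ⊆ S be commutative rings with a multiplicatively closed set C of nonzerodivisors of S such that R_C = S_C, the extension R ⊆ S is quadratic, and there is a subring A ⊆ R with A ⊆ S C-analytic. Suppose I is an ideal of R contracted from S (I = IS ∩ R) meeting C, and J is a finitely generated ideal of S with J ⊆ IS and (IS)^{n+1} = J(IS)^n. Then the ideal J' = (J ∩ A)R of R satisfies J' ⊆ I and I^{n+2} = J'·I^{n+1}; that is, J' is a reduction of I with reduction number at most n+1. -/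
/-!
Pick `x₀ ∈ I ∩ C`. Analyticity makes `K ↦ K ∩ A` and `B ↦ BS` inverse bijections between
ideals of `S` and of `A` that meet `C`, and they are multiplicative there; hence
`(IS)ⁿ⁺¹ = J(IS)ⁿ` contracts to `(IS ∩ A)ⁿ⁺¹ = (J ∩ A)(IS ∩ A)ⁿ`, and extending to `R` gives
`Lⁿ⁺¹ = J'Lⁿ` for `L = (IS ∩ A)R ⊆ I`. Quadraticity gives `I² = LI`: writing `x = a + x₀s`,
`y = b + x₀t` with `a, b ∈ I ∩ A`, the product `x₀²st` falls into `x₀(x - a)R + x₀(y - b)R + x₀²R`.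
Therefore `Iⁿ⁺² = Lⁿ⁺¹I = J'LⁿI ⊆ J'Iⁿ⁺¹`.
-/

section

open Ideal

variable {S : Type*} [CommRing S]

structure Subring.IsAnalytic (A : Subring S) (C : Submonoid S) : Prop where
  subset : (C : Set S) ⊆ A
  exists_add_mul : ∀ c ∈ C, ∀ s : S, ∃ a ∈ A, ∃ t : S, s = a + c * t
  exists_eq_mul : ∀ c ∈ C, ∀ a : S, a ∈ A → (∃ t : S, a = c * t) → ∃ b ∈ A, a = c * b

def Subring.IsQuadratic (R : Subring S) : Prop :=
  ∀ s t : S, ∃ a b r : R, s * t = s * (a : S) + t * (b : S) + (r : S)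

/-- The ideal `(K ∩ A)R` of `R`. -/
def Ideal.interSpan (K : Ideal S) (A R : Subring S) : Ideal R :=
  Ideal.span {x : R | (x : S) ∈ K ∧ (x : S) ∈ A}

namespace Subring.IsAnalytic

variable {A : Subring S} {C : Submonoid S} (hA : A.IsAnalytic C)
include hA

theorem exists_mem_add_mul {K : Ideal S} {c : S} (hc : c ∈ C) (hcK : c ∈ K) {s : S}
    (hs : s ∈ K) : ∃ a ∈ A, a ∈ K ∧ ∃ t : S, s = a + c * t := by
  obtain ⟨a, haA, t, rfl⟩ := hA.exists_add_mul c hc s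
  refine ⟨a, haA, ?_, t, rfl⟩
  simpa using K.sub_mem hs (K.mul_mem_right t hcK)

theorem map_comap_eq {K : Ideal S} {c : S} (hc : c ∈ C) (hcK : c ∈ K) :
    (K.comap A.subtype).map A.subtype = K := by
  refine le_antisymm map_comap_le fun s hs => ?_
  obtain ⟨a, haA, haK, t, rfl⟩ := hA.exists_mem_add_mul hc hcK hs
  have hmem : ∀ x (hx : x ∈ A), x ∈ K → x ∈ (K.comap A.subtype).map A.subtype :=
    fun x hx hxK => mem_map_of_mem A.subtype (x := ⟨x, hx⟩) hxK
  exact add_mem (hmem a haA haK) (mul_mem_right t _ (hmem c (hA.subset hc) hcK))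

theorem exists_add_mul_of_mem_map {B : Ideal A} {d : A} (hd : (d : S) ∈ C) {s : S}
    (hs : s ∈ B.map A.subtype) : ∃ b ∈ B, ∃ t : S, s = (b : S) + d * t := by
  induction hs using Submodule.span_induction with
  | mem x hx =>
    obtain ⟨b, hb, rfl⟩ := hx
    exact ⟨b, hb, 0, by simp⟩
  | zero => exact ⟨0, zero_mem _, 0, by simp⟩
  | add x y _ _ ihx ihy =>
    obtain ⟨b₁, hb₁, t₁, rfl⟩ := ihx
    obtain ⟨b₂, hb₂, t₂, rfl⟩ := ihy
    exact ⟨b₁ + b₂, add_mem hb₁ hb₂, t₁ + t₂, by push_cast; ring⟩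
  | smul r x _ ihx =>
    obtain ⟨b, hb, t, rfl⟩ := ihx
    obtain ⟨a, haA, u, rfl⟩ := hA.exists_add_mul d hd r
    exact ⟨⟨a, haA⟩ * b, B.mul_mem_left _ hb, a * t + u * b + d * u * t, by
      rw [smul_eq_mul]; push_cast; ring⟩

theorem comap_map_eq {B : Ideal A} {d : A} (hd : (d : S) ∈ C) (hdB : d ∈ B) :
    (B.map A.subtype).comap A.subtype = B := by
  refine le_antisymm (fun a ha => ?_) le_comap_map
  obtain ⟨b, hb, t, hab⟩ := hA.exists_add_mul_of_mem_map hd ha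
  obtain ⟨e, heA, hae⟩ := hA.exists_eq_mul d hd (a - b) (sub_mem a.2 b.2)
    ⟨t, by rw [show (a : S) = b + d * t from hab]; ring⟩
  have : a = b + d * ⟨e, heA⟩ := Subtype.ext (by push_cast; linear_combination hae)
  exact this ▸ add_mem hb (B.mul_mem_right _ hdB)

theorem comap_mul {K L : Ideal S} {c c' : S} (hc : c ∈ C) (hcK : c ∈ K) (hc' : c' ∈ C)
    (hc'L : c' ∈ L) : (K * L).comap A.subtype = K.comap A.subtype * L.comap A.subtype := by
  have hcc' : (⟨c, hA.subset hc⟩ : A) * ⟨c', hA.subset hc'⟩ ∈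
      K.comap A.subtype * L.comap A.subtype :=
    mul_mem_mul (show (⟨c, hA.subset hc⟩ : A) ∈ K.comap A.subtype from hcK)
      (show (⟨c', hA.subset hc'⟩ : A) ∈ L.comap A.subtype from hc'L)
  rw [← hA.comap_map_eq (mul_mem hc hc') hcc', Ideal.map_mul, hA.map_comap_eq hc hcK,
    hA.map_comap_eq hc' hc'L]

theorem comap_pow {K : Ideal S} {c : S} (hc : c ∈ C) (hcK : c ∈ K) (n : ℕ) :
    (K ^ n).comap A.subtype = K.comap A.subtype ^ n := by
  induction n with
  | zero => simp
  | succ n ih =>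
    rw [pow_succ, hA.comap_mul (pow_mem hc n) (pow_mem_pow hcK n) hc hcK, ih, pow_succ]

end Subring.IsAnalytic

namespace Ideal

variable {A R : Subring S}

theorem interSpan_le_comap (K : Ideal S) : K.interSpan A R ≤ K.comap R.subtype :=
  span_le.mpr fun _ hx => hx.1

theorem interSpan_eq_map (hAR : A ≤ R) (K : Ideal S) :
    K.interSpan A R = (K.comap A.subtype).map (Subring.inclusion hAR) := by
  rw [interSpan, map]
  congr 1
  ext x
  exact ⟨fun hx => ⟨⟨x, hx.2⟩, hx.1, rfl⟩, by rintro ⟨a, ha, rfl⟩; exact ⟨ha, a.2⟩⟩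

theorem interSpan_mul {C : Submonoid S} (hA : A.IsAnalytic C) (hAR : A ≤ R) {K L : Ideal S}
    {c c' : S} (hc : c ∈ C) (hcK : c ∈ K) (hc' : c' ∈ C) (hc'L : c' ∈ L) :
    (K * L).interSpan A R = K.interSpan A R * L.interSpan A R := by
  simp only [interSpan_eq_map hAR, hA.comap_mul hc hcK hc' hc'L, Ideal.map_mul]

theorem interSpan_pow {C : Submonoid S} (hA : A.IsAnalytic C) (hAR : A ≤ R) {K : Ideal S}
    {c : S} (hc : c ∈ C) (hcK : c ∈ K) (n : ℕ) :
    (K ^ n).interSpan A R = K.interSpan A R ^ n := by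
  simp only [interSpan_eq_map hAR, hA.comap_pow hc hcK, Ideal.map_pow]

theorem pow_succ_le_pow_mul_of_mul_self_le {T : Type*} [CommSemiring T] {I L : Ideal T}
    (h : I * I ≤ L * I) (k : ℕ) : I ^ (k + 1) ≤ L ^ k * I := by
  induction k with
  | zero => simp
  | succ k ih =>
    calc I ^ (k + 2) = I ^ (k + 1) * I := pow_succ I (k + 1)
      _ ≤ L ^ k * (I * I) := by rw [← mul_assoc]; exact mul_mono_left ih
      _ ≤ L ^ k * (L * I) := mul_mono_right h
      _ = L ^ (k + 1) * I := by rw [pow_succ, mul_assoc]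

end Ideal

theorem Subring.IsQuadratic.mul_self_le_interSpan_mul {A R : Subring S} {C : Submonoid S}
    (hquad : R.IsQuadratic) (hA : A.IsAnalytic C) (hAR : A ≤ R) {I : Ideal R}
    (hI : I = (I.map R.subtype).comap R.subtype) {x₀ : R} (hx₀I : x₀ ∈ I) (hx₀C : (x₀ : S) ∈ C) :
    I * I ≤ (I.map R.subtype).interSpan A R * I := by
  set L := (I.map R.subtype).interSpan A R
  have hx₀IS : (x₀ : S) ∈ I.map R.subtype := mem_map_of_mem _ hx₀I
  have hsplit : ∀ x ∈ I, ∃ a : R, a ∈ I ∧ a ∈ L ∧ ∃ s : S, (x : S) = a + x₀ * s := by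
    intro x hx
    obtain ⟨a, haA, haIS, s, hxs⟩ := hA.exists_mem_add_mul hx₀C hx₀IS (mem_map_of_mem _ hx)
    exact ⟨⟨a, hAR haA⟩, hI ▸ haIS, subset_span ⟨haIS, haA⟩, s, hxs⟩
  have hx₀L : x₀ ∈ L := subset_span ⟨hx₀IS, hA.subset hx₀C⟩
  refine mul_le.mpr fun x hx y hy => ?_
  obtain ⟨a, haI, haL, s, hxs⟩ := hsplit x hx
  obtain ⟨b, hbI, hbL, t, hyt⟩ := hsplit y hy
  obtain ⟨a', b', r, hst⟩ := hquad s t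
  have hxy : x * y = a * y + b * (x - a) + x₀ * ((x - a) * a')
      + x₀ * ((y - b) * b') + x₀ * (x₀ * r) := by
    apply Subtype.ext
    push_cast
    rw [hxs, hyt]
    linear_combination (x₀ : S) ^ 2 * hst
  rw [hxy]
  refine add_mem (add_mem (add_mem (add_mem ?_ ?_) ?_) ?_) ?_
  · exact mul_mem_mul haL hy
  · exact mul_mem_mul hbL (sub_mem hx haI)
  · exact mul_mem_mul hx₀L (I.mul_mem_right _ (sub_mem hx haI))
  · exact mul_mem_mul hx₀L (I.mul_mem_right _ (sub_mem hy hbI))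
  · exact mul_mem_mul hx₀L (I.mul_mem_right _ hx₀I)

end

theorem stmt19_general (S : Type*) [CommRing S] (R A : Subring S) (hAR : A ≤ R)
    (C : Submonoid S) (hCA : (C : Set S) ⊆ A)
    (hquad : ∀ s t : S, ∃ a b r : R, s * t = s * (a : S) + t * (b : S) + (r : S))
    (h1 : ∀ c ∈ C, ∀ s : S, ∃ a ∈ A, ∃ t : S, s = a + c * t)
    (h2 : ∀ c ∈ C, ∀ a : S, a ∈ A → (∃ t : S, a = c * t) → ∃ b ∈ A, a = c * b)
    (I : Ideal R) (hIcontr : I = (I.map R.subtype).comap R.subtype)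
    (hIC : ∃ x : R, x ∈ I ∧ (x : S) ∈ C)
    (J : Ideal S) (hJI : J ≤ I.map R.subtype)
    (n : ℕ) (hred : (I.map R.subtype) ^ (n + 1) = J * (I.map R.subtype) ^ n) :
    Ideal.span {x : R | (x : S) ∈ J ∧ (x : S) ∈ A} ≤ I ∧
      I ^ (n + 2) = Ideal.span {x : R | (x : S) ∈ J ∧ (x : S) ∈ A} * I ^ (n + 1) := by
  change J.interSpan A R ≤ I ∧ I ^ (n + 2) = J.interSpan A R * I ^ (n + 1)
  obtain ⟨x₀, hx₀I, hx₀C⟩ := hIC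
  have hA : A.IsAnalytic C := ⟨hCA, h1, h2⟩
  set IS := I.map R.subtype
  set L := IS.interSpan A R
  have hx₀IS : (x₀ : S) ∈ IS := Ideal.mem_map_of_mem _ hx₀I
  have hx₀J : (x₀ : S) ^ (n + 1) ∈ J := by
    have h := Ideal.pow_mem_pow hx₀IS (n + 1)
    rw [hred] at h
    exact (Ideal.mul_le_left : J * IS ^ n ≤ J) h
  have hJ'I : J.interSpan A R ≤ I :=
    ((Ideal.interSpan_le_comap J).trans (Ideal.comap_mono hJI)).trans_eq hIcontr.symm
  have hLI : L ≤ I := (Ideal.interSpan_le_comap IS).trans_eq hIcontr.symm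
  have hLred : L ^ (n + 1) = J.interSpan A R * L ^ n := by
    rw [← Ideal.interSpan_pow hA hAR hx₀C hx₀IS, hred,
      Ideal.interSpan_mul hA hAR (pow_mem hx₀C _) hx₀J (pow_mem hx₀C _)
        (Ideal.pow_mem_pow hx₀IS n),
      Ideal.interSpan_pow hA hAR hx₀C hx₀IS]
  refine ⟨hJ'I, le_antisymm ?_ ?_⟩
  · calc I ^ (n + 2) ≤ L ^ (n + 1) * I := Ideal.pow_succ_le_pow_mul_of_mul_self_le
          (Subring.IsQuadratic.mul_self_le_interSpan_mul hquad hA hAR hIcontr hx₀I hx₀C) _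
      _ = J.interSpan A R * (L ^ n * I) := by rw [hLred, mul_assoc]
      _ ≤ J.interSpan A R * I ^ (n + 1) := by
          rw [pow_succ I n]
          exact Ideal.mul_mono_right (Ideal.mul_mono_left (pow_le_pow_left' hLI n))
  · rw [pow_succ' I (n + 1)]
    exact Ideal.mul_mono_left hJ'I

/-- Let `R ⊆ S` be commutative rings with a multiplicatively closed set `C` of
nonzerodivisors of `S` such that `R_C = S_C`, the extension `R ⊆ S` is quadratic, and
there is a subring `A ⊆ R` with `A ⊆ S` `C`-analytic.  If `I` is an ideal of `R`
contracted from `S` and meeting `C`, and `J` is a finitely generated ideal of `S` with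
`J ⊆ IS` and `(IS)ⁿ⁺¹ = J(IS)ⁿ`, then `J' = (J ∩ A)R` satisfies `J' ⊆ I` and
`Iⁿ⁺² = J'·Iⁿ⁺¹`; that is, `J'` is a reduction of `I` with reduction number at most
`n + 1`. -/
theorem stmt19 (S : Type*) [CommRing S] (R A : Subring S) (hAR : A ≤ R)
    (C : Submonoid S) (hreg : (C : Set S) ⊆ nonZeroDivisors S) (hCA : (C : Set S) ⊆ A)
    (hloc : ∀ s : S, ∃ c ∈ C, c * s ∈ R)
    (hquad : ∀ s t : S, ∃ a b r : R, s * t = s * (a : S) + t * (b : S) + (r : S))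
    (h1 : ∀ c ∈ C, ∀ s : S, ∃ a ∈ A, ∃ t : S, s = a + c * t)
    (h2 : ∀ c ∈ C, ∀ a : S, a ∈ A → (∃ t : S, a = c * t) → ∃ b ∈ A, a = c * b)
    (I : Ideal R) (hIcontr : I = (I.map R.subtype).comap R.subtype)
    (hIC : ∃ x : R, x ∈ I ∧ (x : S) ∈ C)
    (J : Ideal S) (hJfg : J.FG) (hJI : J ≤ I.map R.subtype)
    (n : ℕ) (hred : (I.map R.subtype) ^ (n + 1) = J * (I.map R.subtype) ^ n) :
    Ideal.span {x : R | (x : S) ∈ J ∧ (x : S) ∈ A} ≤ I ∧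
      I ^ (n + 2) = Ideal.span {x : R | (x : S) ∈ J ∧ (x : S) ∈ A} * I ^ (n + 1) :=
  stmt19_general S R A hAR C hCA hquad h1 h2 I hIcontr hIC J hJI n hred
end
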